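/- Let k be a commutative unital ring, let m ≥ 1, and let A be a k-algebra such that [x₁,x₂]^m is a polynomial identity of A. If a ∈ A is nilpotent, then the two-sided ideal of A generated by a is a nil ideal (every element of it is nilpotent), and likewise the right ideal aA and the left ideal Aa are nil. -/

import Mathlib

/-- `p` is a polynomial identity of the `k`-algebra `A`: every `k`-algebra
homomorphism from the free associative algebra on countably many variables to
`A` (equivalently, every substitution of elements of `A` for the variables)
sends `p` to `0`. -/
def IsPolyId (k A : Type*) [CommRing k] [Semiring A] [Algebra k A]
    (p : FreeAlgebra k ℕ) : Prop :=
  ∀ f : ℕ → A, FreeAlgebra.lift k f p = 0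

/-- `[x₁,x₂]^m`, the `m`-th power of the commutator of the first two variables
of the free algebra. -/
noncomputable def commPow (k : Type*) [CommRing k] (m : ℕ) : FreeAlgebra k ℕ :=
  (FreeAlgebra.ι k 0 * FreeAlgebra.ι k 1 - FreeAlgebra.ι k 1 * FreeAlgebra.ι k 0) ^ m

/-- `[x₁,x₂][x₃,x₄]⋯[x₂ₘ₋₁,x₂ₘ]`, the product of `m` commutators in `2m`
distinct variables of the free algebra. -/
noncomputable def commProd (k : Type*) [CommRing k] (m : ℕ) : FreeAlgebra k ℕ :=
  ((List.range m).map (fun i =>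
    FreeAlgebra.ι k (2 * i) * FreeAlgebra.ι k (2 * i + 1)
      - FreeAlgebra.ι k (2 * i + 1) * FreeAlgebra.ι k (2 * i))).prod

/-- The standard polynomial `st_d(x₁,…,x_d) = Σ_{σ ∈ S_d} sgn(σ) x_{σ(1)}⋯x_{σ(d)}`
in the free algebra. -/
noncomputable def stPoly (k : Type*) [CommRing k] (d : ℕ) : FreeAlgebra k ℕ :=
  ∑ σ : Equiv.Perm (Fin d),
    (Equiv.Perm.sign σ : ℤ) •
      ((List.finRange d).map (fun i => FreeAlgebra.ι k ((σ i : Fin d) : ℕ))).prod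

/-- `A` satisfies a proper (monic multilinear) polynomial identity: for some
`n ≥ 1` there are coefficients `c σ ∈ k` for the non-identity permutations `σ`
of `{1,…,n}` such that `x₁⋯x_n + Σ_{σ ≠ id} c_σ x_{σ(1)}⋯x_{σ(n)}` is a
polynomial identity of `A`. -/
def SatisfiesProperId (k A : Type*) [CommRing k] [Semiring A] [Algebra k A] : Prop :=
  ∃ n : ℕ, 1 ≤ n ∧ ∃ c : Equiv.Perm (Fin n) → k,
    IsPolyId k A
      (((List.finRange n).map (fun i => FreeAlgebra.ι k (i : ℕ))).prod
        + ∑ σ ∈ Finset.univ.erase (1 : Equiv.Perm (Fin n)),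
            c σ • ((List.finRange n).map (fun i => FreeAlgebra.ι k ((σ i : Fin n) : ℕ))).prod)

/-- `a` is strongly nilpotent: every sequence `s` with `s 0 = a` and
`s (n+1) ∈ s n • A • s n` is eventually zero. -/
def IsStronglyNilpotent {A : Type*} [Ring A] (a : A) : Prop :=
  ∀ s : ℕ → A, s 0 = a → (∀ n, ∃ x : A, s (n + 1) = s n * x * s n) →
    ∃ N, ∀ n ≥ N, s n = 0

/-! In a ring with `[x, y] ^ m = 0`, a square-zero element `a` satisfies `(a x) ^ (m + 1) = 0`
for every `x`, because `a (x a) ^ m = a (x a - a x) ^ m`. In a semiprime ring a right ideal `a R`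
that is nil of bounded index is zero (Levitzki), so a semiprime ring with this identity is reduced.
The identity passes to quotients, hence every nilpotent element lies in every semiprime ideal.
Conversely an element lying in every semiprime ideal is nilpotent: an ideal maximal among those
avoiding the powers of `x` is semiprime. -/

def IsSemiprimeRing (R : Type*) [Ring R] : Prop :=
  ∀ c : R, (∀ z : R, c * z * c = 0) → c = 0

def TwoSidedIdeal.IsSemiprime {R : Type*} [Ring R] (P : TwoSidedIdeal R) : Prop :=
  ∀ u : R, (∀ r : R, u * r * u ∈ P) → u ∈ P

theorem isReduced_of_mul_self_eq_zero {M : Type*} [MonoidWithZero M]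
    (h : ∀ a : M, a * a = 0 → a = 0) : IsReduced M := by
  have two_pow : ∀ (a : M) (k : ℕ), a ^ 2 ^ k = 0 → a = 0 := by
    intro a k
    induction k with
    | zero => simp
    | succ k ih => exact fun hk => ih (h _ (by rwa [← pow_add, ← two_mul, ← pow_succ']))
  exact ⟨fun a ⟨n, hn⟩ => two_pow a n (pow_eq_zero_of_le n.lt_two_pow_self.le hn)⟩

theorem add_pow_mul_of_mul_eq_zero {R : Type*} [Semiring R] {p q : R} (h : q * p = 0) (n : ℕ) :
    (p + q) ^ n * p = p ^ (n + 1) := by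
  induction n with
  | zero => simp
  | succ n ih =>
    have hq : q * p ^ (n + 1) = 0 := by rw [pow_succ', ← mul_assoc, h, zero_mul]
    rw [pow_succ', mul_assoc, ih, add_mul, hq, add_zero, ← pow_succ']

theorem add_pow_succ_of_mul_eq_zero {R : Type*} [Semiring R] {p q : R} (h : q * p = 0)
    (n : ℕ) : (p + q) ^ (n + 1) = p ^ (n + 1) + (p + q) ^ n * q := by
  rw [pow_succ, mul_add, add_pow_mul_of_mul_eq_zero h]

theorem exists_add_pow_succ_eq_of_mul_eq_zero {R : Type*} [Semiring R] {p q : R}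
    (h : q * p = 0) (n : ℕ) :
    ∃ d : R, (p + q) ^ (n + 1) = p ^ (n + 1) + p ^ n * q + d * q * q := by
  cases n with
  | zero => exact ⟨0, by simp⟩
  | succ n =>
    refine ⟨(p + q) ^ n, ?_⟩
    rw [add_pow_succ_of_mul_eq_zero h, add_pow_succ_of_mul_eq_zero h, add_mul, ← add_assoc]

section CommutatorIdentity

variable {R : Type*} [Ring R] {m : ℕ}

theorem mul_mul_sub_pow_of_mul_self_eq_zero {a : R} (ha : a * a = 0) (x : R) (n : ℕ) :
    a * (x * a - a * x) ^ n = a * (x * a) ^ n := by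
  induction n with
  | zero => simp
  | succ n ih =>
    have h : a * (x * a) ^ n * a = 0 := by rw [← mul_pow_mul, mul_assoc, ha, mul_zero]
    rw [pow_succ, ← mul_assoc, ih, mul_sub, pow_succ, ← mul_assoc _ a x, h, zero_mul, sub_zero,
      mul_assoc]

theorem mul_pow_eq_zero_of_mul_self_eq_zero (hcomm : ∀ x y : R, (x * y - y * x) ^ m = 0)
    {a : R} (ha : a * a = 0) (x : R) : (a * x) ^ (m + 1) = 0 := by
  rw [pow_succ, ← mul_assoc, mul_pow_mul, ← mul_mul_sub_pow_of_mul_self_eq_zero ha, hcomm,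
    mul_zero, zero_mul]

end CommutatorIdentity

namespace IsSemiprimeRing

variable {R : Type*} [Ring R] (hR : IsSemiprimeRing R)
include hR

/-- The descent step of Levitzki's lemma. -/
theorem mul_mul_pow_eq_zero_of_succ {a : R} (hnil : ∀ x : R, IsNilpotent (a * x)) {k : ℕ}
    (hk : ∀ x : R, a * (x * a) ^ (k + 1) = 0) (x : R) : a * (x * a) ^ k = 0 := by
  set c := a * (x * a) ^ k
  refine hR c fun z => ?_
  have hcp : c * (x * a) = 0 := by rw [mul_assoc, ← pow_succ]; exact hk x
  obtain ⟨d, hd⟩ := exists_add_pow_succ_eq_of_mul_eq_zero (p := x * a) (q := z * c)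
    (by rw [mul_assoc, hcp, mul_zero]) k
  -- `c z c` is read off from `a (y a) ^ (k + 1) = 0` for `y = x + z (a x) ^ k`,
  -- for which `y a = x a + z c`.
  have hy : (x + z * (a * x) ^ k) * a = x * a + z * c := by rw [add_mul, mul_assoc, mul_pow_mul]
  have h0 := hk (x + z * (a * x) ^ k)
  rw [hy, hd, mul_add, mul_add, hk x, zero_add] at h0
  have h1 : (1 + a * (d * z)) * (c * z * c) = 0 := by
    rw [← h0]; simp only [c, add_mul, one_mul, mul_assoc]
  exact (hnil (d * z)).isUnit_one_add.mul_right_eq_zero.1 h1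

theorem eq_zero_of_forall_mul_pow_eq_zero {a : R} {n : ℕ} (h : ∀ x : R, (a * x) ^ n = 0) :
    a = 0 := by
  have descend : ∀ k : ℕ, (∀ x : R, a * (x * a) ^ k = 0) → a = 0 := by
    intro k
    induction k with
    | zero => exact fun hk => by simpa using hk 1
    | succ k ih => exact fun hk => ih (hR.mul_mul_pow_eq_zero_of_succ (fun x => ⟨n, h x⟩) hk)
  exact descend n fun x => by rw [← mul_pow_mul, h, zero_mul]

theorem isReduced_of_commutator_pow_eq_zero {m : ℕ}
    (hcomm : ∀ x y : R, (x * y - y * x) ^ m = 0) : IsReduced R :=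
  isReduced_of_mul_self_eq_zero fun _ ha =>
    hR.eq_zero_of_forall_mul_pow_eq_zero (mul_pow_eq_zero_of_mul_self_eq_zero hcomm ha)

end IsSemiprimeRing

namespace TwoSidedIdeal

variable {R : Type*} [Ring R]

theorem mem_sSup_of_isChain {c : Set (TwoSidedIdeal R)} (hc : IsChain (· ≤ ·) c)
    (hne : c.Nonempty) {x : R} : x ∈ sSup c ↔ ∃ I ∈ c, x ∈ I := by
  refine ⟨fun hx => ?_, fun ⟨I, hI, hxI⟩ => le_sSup hI hxI⟩
  let U : TwoSidedIdeal R := .mk' {x | ∃ I ∈ c, x ∈ I}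
    (let ⟨I, hI⟩ := hne; ⟨I, hI, I.zero_mem⟩)
    (fun ⟨I, hI, hx⟩ ⟨J, hJ, hy⟩ =>
      let ⟨K, hK, hIK, hJK⟩ := hc.directedOn I hI J hJ
      ⟨K, hK, K.add_mem (hIK hx) (hJK hy)⟩)
    (fun ⟨I, hI, hx⟩ => ⟨I, hI, I.neg_mem hx⟩)
    (fun ⟨I, hI, hy⟩ => ⟨I, hI, I.mul_mem_left _ _ hy⟩)
    (fun ⟨I, hI, hx⟩ => ⟨I, hI, I.mul_mem_right _ _ hx⟩)
  have hle : sSup c ≤ U := sSup_le fun I hI y hy => (mem_mk' ..).2 ⟨I, hI, hy⟩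
  exact (mem_mk' _ _ _ _ _ _ x).1 (hle hx)

def leftColon (P : TwoSidedIdeal R) (u : R) : TwoSidedIdeal R :=
  .mk' {z | ∀ r, z * r * u ∈ P} (by simp [P.zero_mem])
    (fun hy hz r => by simpa [add_mul] using P.add_mem (hy r) (hz r))
    (fun hz r => by simpa using P.neg_mem (hz r))
    (fun {a _} hz r => by simpa [mul_assoc] using P.mul_mem_left a _ (hz r))
    (fun {_ b} hz r => by simpa [mul_assoc] using hz (b * r))

def rightColon (P : TwoSidedIdeal R) (y : R) : TwoSidedIdeal R :=
  .mk' {z | ∀ r, y * r * z ∈ P} (by simp [P.zero_mem])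
    (fun hy hz r => by simpa [mul_add] using P.add_mem (hy r) (hz r))
    (fun hz r => by simpa using P.neg_mem (hz r))
    (fun {a _} hz r => by simpa [mul_assoc] using hz (r * a))
    (fun {_ b} hz r => by simpa [mul_assoc] using P.mul_mem_right _ b (hz r))

theorem mem_leftColon {P : TwoSidedIdeal R} {u z : R} :
    z ∈ P.leftColon u ↔ ∀ r, z * r * u ∈ P :=
  mem_mk' ..

theorem mem_rightColon {P : TwoSidedIdeal R} {y z : R} :
    z ∈ P.rightColon y ↔ ∀ r, y * r * z ∈ P :=
  mem_mk' ..

theorem le_leftColon (P : TwoSidedIdeal R) (u : R) : P ≤ P.leftColon u :=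
  fun _ hz => mem_leftColon.2 fun r => P.mul_mem_right _ u (P.mul_mem_right _ r hz)

theorem le_rightColon (P : TwoSidedIdeal R) (y : R) : P ≤ P.rightColon y :=
  fun _ hz => mem_rightColon.2 fun r => P.mul_mem_left (y * r) _ hz

theorem exists_isSemiprime_forall_pow_notMem {x : R} (hx : ¬IsNilpotent x) :
    ∃ P : TwoSidedIdeal R, P.IsSemiprime ∧ ∀ n, x ^ n ∉ P := by
  let S : Set (TwoSidedIdeal R) := {I | ∀ n, x ^ n ∉ I}
  have hbot : ⊥ ∈ S := fun n hn => hx ⟨n, (mem_bot R).1 hn⟩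
  obtain ⟨P, -, hP⟩ := zorn_le_nonempty₀ S
    (fun c hcS hc I hI => ⟨sSup c,
      fun n hn => let ⟨J, hJ, hxJ⟩ := (mem_sSup_of_isChain hc ⟨I, hI⟩).1 hn; hcS hJ n hxJ,
      fun _ hJ => le_sSup hJ⟩) ⊥ hbot
  have meets : ∀ J, P ≤ J → ∀ u ∈ J, u ∉ P → ∃ n, x ^ n ∈ J := by
    intro J hPJ u hu huP
    by_contra! h
    exact huP (hP.2 h hPJ hu)
  refine ⟨P, fun u hu => ?_, hP.1⟩
  by_contra huP
  obtain ⟨n, hn⟩ := meets _ (P.le_leftColon u) u (mem_leftColon.2 hu) huP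
  obtain ⟨k, hk⟩ :=
    meets _ (P.le_rightColon (x ^ n)) u (mem_rightColon.2 (mem_leftColon.1 hn)) huP
  exact hP.1 (n + k) (by simpa [pow_add] using mem_rightColon.1 hk 1)

theorem isNilpotent_of_forall_isSemiprime {x : R}
    (h : ∀ P : TwoSidedIdeal R, P.IsSemiprime → x ∈ P) : IsNilpotent x := by
  by_contra hx
  obtain ⟨P, hP, hxP⟩ := exists_isSemiprime_forall_pow_notMem hx
  exact hxP 1 (by simpa using h P hP)

theorem ringCon_mk'_eq_zero_iff {P : TwoSidedIdeal R} {y : R} :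
    P.ringCon.mk' y = 0 ↔ y ∈ P := by
  rw [← mem_ker, ker_ringCon_mk']

theorem IsSemiprime.isSemiprimeRing_quotient {P : TwoSidedIdeal R} (hP : P.IsSemiprime) :
    IsSemiprimeRing P.ringCon.Quotient := by
  intro c hc
  obtain ⟨u, rfl⟩ := P.ringCon.mk'_surjective c
  exact ringCon_mk'_eq_zero_iff.2
    (hP u fun r => ringCon_mk'_eq_zero_iff.1 (by simpa using hc (P.ringCon.mk' r)))

theorem IsSemiprime.mem_of_isNilpotent {m : ℕ} (hcomm : ∀ x y : R, (x * y - y * x) ^ m = 0)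
    {P : TwoSidedIdeal R} (hP : P.IsSemiprime) {a : R} (ha : IsNilpotent a) : a ∈ P := by
  have hcommP : ∀ X Y : P.ringCon.Quotient, (X * Y - Y * X) ^ m = 0 := by
    intro X Y
    obtain ⟨x, rfl⟩ := P.ringCon.mk'_surjective X
    obtain ⟨y, rfl⟩ := P.ringCon.mk'_surjective Y
    rw [← map_mul, ← map_mul, ← map_sub, ← map_pow, hcomm, map_zero]
  have : IsReduced P.ringCon.Quotient :=
    hP.isSemiprimeRing_quotient.isReduced_of_commutator_pow_eq_zero hcommP
  exact ringCon_mk'_eq_zero_iff.1 (ha.map _).eq_zero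

end TwoSidedIdeal

theorem commutator_pow_eq_zero_of_isPolyId_commPow {k A : Type*} [CommRing k] [Ring A]
    [Algebra k A] {m : ℕ} (h : IsPolyId k A (commPow k m)) (x y : A) :
    (x * y - y * x) ^ m = 0 := by
  simpa [commPow] using h fun n => if n = 0 then x else y

theorem ideals_generated_by_nilpotent_are_nil_general
    (k A : Type*) [CommRing k] [Ring A] [Algebra k A]
    (m : ℕ) (hid : IsPolyId k A (commPow k m))
    (a : A) (ha : IsNilpotent a) :
    (∀ x ∈ TwoSidedIdeal.span ({a} : Set A), IsNilpotent x) ∧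
    (∀ x : A, IsNilpotent (a * x)) ∧
    (∀ x : A, IsNilpotent (x * a)) := by
  have hcomm := commutator_pow_eq_zero_of_isPolyId_commPow hid
  have hnil : ∀ x ∈ TwoSidedIdeal.span ({a} : Set A), IsNilpotent x := fun x hx =>
    TwoSidedIdeal.isNilpotent_of_forall_isSemiprime fun P hP =>
      TwoSidedIdeal.span_le.2 (Set.singleton_subset_iff.2 (hP.mem_of_isNilpotent hcomm ha)) hx
  have ha_mem : a ∈ TwoSidedIdeal.span ({a} : Set A) := TwoSidedIdeal.subset_span rfl
  exact ⟨hnil, fun x => hnil _ (TwoSidedIdeal.mul_mem_right _ _ x ha_mem),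
    fun x => hnil _ (TwoSidedIdeal.mul_mem_left _ x _ ha_mem)⟩

theorem ideals_generated_by_nilpotent_are_nil
    (k A : Type*) [CommRing k] [Ring A] [Algebra k A]
    (m : ℕ) (hm : 1 ≤ m) (hid : IsPolyId k A (commPow k m))
    (a : A) (ha : IsNilpotent a) :
    (∀ x ∈ TwoSidedIdeal.span ({a} : Set A), IsNilpotent x) ∧
    (∀ x : A, IsNilpotent (a * x)) ∧
    (∀ x : A, IsNilpotent (x * a)) :=
  ideals_generated_by_nilpotent_are_nil_general k A m hid a ha
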